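/- arXiv:1703.04896 — 6 statements merged into one kernel-verified Lean document; each statement's English description precedes it below -/
import Mathlib

section
/- Let a, b ∈ ℂ with a ≠ 0 and |b| ≤ |a|, let c be a nonzero complex number, and set m₋ := 1 − conj(b)/conj(a) and m₊ := 1 + conj(b)/conj(a). Then the map ω(ζ) := (c/2)·(m₋·ζ + m₊·f(ζ)) is injective on Ω := ℂ ∖ [−1,1]. -/
/-!
With `g(ζ) = ζ + f(ζ)` one has `f(ζ)² = ζ² - 1`, hence `(ζ + f(ζ))(ζ - f(ζ)) = 1`, so that
`ζ = (g + g⁻¹)/2` and `f = (g - g⁻¹)/2`: `g` inverts the Joukowski map, and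
`ω = (c/2)(g - d g⁻¹)` with `d = conj b / conj a`, `|d| ≤ 1`. The principal square root has
nonnegative real part, so `|ζ - f| ≤ |ζ + f|`, i.e. `|g| ≥ 1`; and `|g| = 1` would put
`ζ = Re g` on the slit. Finally `w ↦ w - d/w` is injective on `|w| > 1`, because
`(w₁ - d/w₁) - (w₂ - d/w₂) = (w₁ - w₂)(1 + d/(w₁w₂))` and `|d/(w₁w₂)| < 1`.
-/

/-- The slit `[-1,1]`: complex numbers with zero imaginary part and real part in `[-1,1]`. -/
def slit : Set ℂ := {z : ℂ | z.im = 0 ∧ -1 ≤ z.re ∧ z.re ≤ 1}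

/-- The cut plane `Ω = ℂ ∖ [-1,1]`. -/
def Omg : Set ℂ := slitᶜ

/-- The branch `f(ζ) = ζ·(1 − ζ⁻²)^{1/2}` of `(ζ² − 1)^{1/2}` with `f(ζ) ~ ζ` at infinity. -/
noncomputable def fbr (ζ : ℂ) : ℂ := ζ * (1 - ζ⁻¹ ^ 2) ^ ((1 : ℂ) / 2)

open Complex ComplexConjugate

lemma ne_zero_of_mem_Omg {ζ : ℂ} (h : ζ ∈ Omg) : ζ ≠ 0 := by
  rintro rfl
  exact h (by simp [slit])

lemma fbr_sq {ζ : ℂ} (hζ : ζ ≠ 0) : fbr ζ ^ 2 = ζ ^ 2 - 1 := by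
  rw [fbr, mul_pow, one_div, cpow_ofNat_inv_pow]
  field_simp

lemma add_fbr_mul_sub_fbr {ζ : ℂ} (hζ : ζ ≠ 0) : (ζ + fbr ζ) * (ζ - fbr ζ) = 1 := by
  linear_combination -fbr_sq hζ

lemma re_mul_conj_fbr_nonneg (ζ : ℂ) : 0 ≤ (ζ * conj (fbr ζ)).re := by
  rw [fbr, map_mul, ← mul_assoc, mul_conj, re_ofReal_mul, conj_re, one_div, cpow_inv_two_re]
  exact mul_nonneg (normSq_nonneg ζ) (Real.sqrt_nonneg _)

lemma norm_sub_fbr_le_norm_add_fbr (ζ : ℂ) : ‖ζ - fbr ζ‖ ≤ ‖ζ + fbr ζ‖ := by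
  have hsq : normSq (ζ - fbr ζ) ≤ normSq (ζ + fbr ζ) := by
    rw [normSq_add, normSq_sub]
    linarith [re_mul_conj_fbr_nonneg ζ]
  rw [normSq_eq_norm_sq, normSq_eq_norm_sq] at hsq
  exact pow_le_pow_iff_left₀ (norm_nonneg _) (norm_nonneg _) two_ne_zero |>.mp hsq

lemma half_add_inv_mem_slit {w : ℂ} (hw : ‖w‖ = 1) : (w + w⁻¹) / 2 ∈ slit := by
  have hinv : w⁻¹ = conj w := by
    rw [inv_def, normSq_eq_norm_sq, hw, one_pow, inv_one, ofReal_one, mul_one]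
  have hre : |w.re| ≤ 1 := hw ▸ abs_re_le_norm w
  rw [hinv, add_conj, ofReal_mul, ofReal_ofNat, mul_div_cancel_left₀ _ two_ne_zero]
  exact ⟨ofReal_im _, abs_le.mp hre⟩

lemma one_lt_norm_add_fbr {ζ : ℂ} (h : ζ ∈ Omg) : 1 < ‖ζ + fbr ζ‖ := by
  have hprod := add_fbr_mul_sub_fbr (ne_zero_of_mem_Omg h)
  have hnorm : ‖ζ + fbr ζ‖ * ‖ζ - fbr ζ‖ = 1 := by rw [← norm_mul, hprod, norm_one]
  have hle := norm_sub_fbr_le_norm_add_fbr ζ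
  have hge : 1 ≤ ‖ζ + fbr ζ‖ := by nlinarith [norm_nonneg (ζ - fbr ζ)]
  refine hge.lt_of_ne fun heq => h ?_
  have hζ : ζ = ((ζ + fbr ζ) + (ζ + fbr ζ)⁻¹) / 2 := by
    rw [inv_eq_of_mul_eq_one_right hprod]
    ring
  exact hζ ▸ half_add_inv_mem_slit heq.symm

lemma injOn_add_fbr : Set.InjOn (fun ζ => ζ + fbr ζ) Omg := by
  intro ζ₁ h₁ ζ₂ h₂ heq
  have hsub : ζ₁ - fbr ζ₁ = ζ₂ - fbr ζ₂ := by
    rw [← inv_eq_of_mul_eq_one_right (add_fbr_mul_sub_fbr (ne_zero_of_mem_Omg h₁)),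
      ← inv_eq_of_mul_eq_one_right (add_fbr_mul_sub_fbr (ne_zero_of_mem_Omg h₂))]
    exact congrArg Inv.inv heq
  linear_combination (heq + hsub) / 2

lemma injOn_sub_div_self {d : ℂ} (hd : ‖d‖ ≤ 1) :
    Set.InjOn (fun w => w - d / w) {w : ℂ | 1 < ‖w‖} := by
  intro w₁ h₁ w₂ h₂ heq
  simp only [Set.mem_ofPred_eq] at h₁ h₂ heq
  have hw₁ : w₁ ≠ 0 := norm_pos_iff.mp (one_pos.trans h₁)
  have hw₂ : w₂ ≠ 0 := norm_pos_iff.mp (one_pos.trans h₂)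
  have hfactor : (w₁ - w₂) * (w₁ * w₂ + d) = 0 := by
    field_simp at heq
    linear_combination heq
  have hne : w₁ * w₂ + d ≠ 0 := by
    intro h0
    have : ‖d‖ = ‖w₁‖ * ‖w₂‖ := by rw [eq_neg_of_add_eq_zero_right h0, norm_neg, norm_mul]
    nlinarith
  exact sub_eq_zero.mp ((mul_eq_zero.mp hfactor).resolve_right hne)

lemma mul_add_mul_fbr_eq {ζ d : ℂ} (hζ : ζ ≠ 0) :
    (1 - d) * ζ + (1 + d) * fbr ζ = (ζ + fbr ζ) - d / (ζ + fbr ζ) := by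
  rw [div_eq_mul_inv, inv_eq_of_mul_eq_one_right (add_fbr_mul_sub_fbr hζ)]
  ring

theorem stmt_2_general (a b c : ℂ) (hba : ‖b‖ ≤ ‖a‖) (hc : c ≠ 0) :
    Set.InjOn
      (fun ζ : ℂ => (c / 2) *
        ((1 - (starRingEnd ℂ) b / (starRingEnd ℂ) a) * ζ +
          (1 + (starRingEnd ℂ) b / (starRingEnd ℂ) a) * fbr ζ)) Omg := by
  set d := conj b / conj a
  have hd : ‖d‖ ≤ 1 := by
    rw [norm_div, norm_conj, norm_conj]
    exact div_le_one_of_le₀ hba (norm_nonneg a)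
  have hscale : Set.InjOn (fun w : ℂ => c / 2 * w) Set.univ :=
    (mul_right_injective₀ (div_ne_zero hc two_ne_zero)).injOn
  have hjouk := (injOn_sub_div_self hd).comp injOn_add_fbr fun ζ h => one_lt_norm_add_fbr h
  refine (hscale.comp hjouk (Set.mapsTo_univ _ _)).congr fun ζ h => ?_
  simp only [Function.comp_apply, mul_add_mul_fbr_eq (ne_zero_of_mem_Omg h)]

/-- The one-cavity conformal map `ω(ζ) = (c/2)(m₋ ζ + m₊ f(ζ))`, with
`m₋ = 1 − conj b / conj a` and `m₊ = 1 + conj b / conj a`, is injective on `Ω`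
whenever `|b| ≤ |a|` and `c ≠ 0`. -/
theorem stmt_2 (a b c : ℂ) (ha : a ≠ 0) (hba : ‖b‖ ≤ ‖a‖) (hc : c ≠ 0) :
    Set.InjOn
      (fun ζ : ℂ => (c / 2) *
        ((1 - (starRingEnd ℂ) b / (starRingEnd ℂ) a) * ζ +
          (1 + (starRingEnd ℂ) b / (starRingEnd ℂ) a) * fbr ζ)) Omg :=
  stmt_2_general a b c hba hc
end

section
/- Let a, b ∈ ℂ with a ≠ 0, let c be a real number, let ξ ∈ (−1,1), ε ∈ {−1,1}, and set s := √(1−ξ²) and F := ε·i·s. Assume D := (conj(a)+conj(b))ξ + (conj(a)−conj(b))F ≠ 0. Define w := (c/2)·((1 − conj(b)/conj(a)) + (1 + conj(b)/conj(a))·ξ/F) and p := conj(a)·((a+b)ξ − (a−b)F)/D. Then p·w + a·conj(w) = 0. -/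
open ComplexConjugate

section SlitBoundary

variable {a b F : ℂ} {ξ : ℝ}

theorem omega_factor_eq_div (ha : a ≠ 0) (hF : F ≠ 0) :
    (1 - conj b / conj a) + (1 + conj b / conj a) * (ξ : ℂ) / F =
      ((conj a + conj b) * ξ + (conj a - conj b) * F) / (conj a * F) := by
  have hA : conj a ≠ 0 := (map_ne_zero _).mpr ha
  field_simp
  ring

theorem conj_psi_denom_eq (hF : conj F = -F) :
    conj ((conj a + conj b) * (ξ : ℂ) + (conj a - conj b) * F) =
      (a + b) * ξ - (a - b) * F := by
  simp only [map_add, map_sub, map_mul, Complex.conj_conj, Complex.conj_ofReal, hF]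
  ring

/-- Writing `D`, `N` for the denominator and numerator of `ψ`, one has `ω' = (c/2)·D/(conj a·F)`
and `conj D = N`, so the two terms are `(c/2)·N/F` and `-(c/2)·N/F`. -/
theorem equal_strength_of_conj_eq_neg (c : ℝ) (ha : a ≠ 0) (hF0 : F ≠ 0) (hF : conj F = -F)
    (hD : (conj a + conj b) * (ξ : ℂ) + (conj a - conj b) * F ≠ 0) :
    (conj a * ((a + b) * (ξ : ℂ) - (a - b) * F) /
        ((conj a + conj b) * (ξ : ℂ) + (conj a - conj b) * F)) *
      ((c : ℂ) / 2 * ((1 - conj b / conj a) + (1 + conj b / conj a) * (ξ : ℂ) / F)) +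
      a * conj ((c : ℂ) / 2 * ((1 - conj b / conj a) + (1 + conj b / conj a) * (ξ : ℂ) / F))
      = 0 := by
  have hA : conj a ≠ 0 := (map_ne_zero _).mpr ha
  rw [omega_factor_eq_div ha hF0]
  simp only [map_mul, map_div₀, conj_psi_denom_eq hF, Complex.conj_ofReal, map_ofNat,
    Complex.conj_conj, hF]
  generalize (conj a + conj b) * (ξ : ℂ) + (conj a - conj b) * F = D at hD ⊢
  generalize (a + b) * (ξ : ℂ) - (a - b) * F = N
  field_simp
  ring

end SlitBoundary

theorem slit_value_ne_zero {ξ ε : ℝ} (hξ : -1 < ξ ∧ ξ < 1) (hε : ε ≠ 0) :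
    (ε : ℂ) * Complex.I * (Real.sqrt (1 - ξ ^ 2) : ℂ) ≠ 0 := by
  have hs : 0 < Real.sqrt (1 - ξ ^ 2) := Real.sqrt_pos.mpr (by nlinarith)
  exact mul_ne_zero (mul_ne_zero (by exact_mod_cast hε) Complex.I_ne_zero)
    (by exact_mod_cast hs.ne')

theorem conj_slit_value (ξ ε : ℝ) :
    conj ((ε : ℂ) * Complex.I * (Real.sqrt (1 - ξ ^ 2) : ℂ)) =
      -((ε : ℂ) * Complex.I * (Real.sqrt (1 - ξ ^ 2) : ℂ)) := by
  simp

/-- The boundary values of the one-cavity solution `ω'`, `ψ` on the two sides of the slit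
satisfy the equal-strength boundary condition `ψ·ω' + a·conj(ω') = 0`. -/
theorem stmt_5 (a b : ℂ) (ha : a ≠ 0) (c : ℝ) (ξ : ℝ) (hξ : -1 < ξ ∧ ξ < 1)
    (ε : ℝ) (hε : ε = -1 ∨ ε = 1)
    (hD : ((starRingEnd ℂ) a + (starRingEnd ℂ) b) * (ξ : ℂ) +
       ((starRingEnd ℂ) a - (starRingEnd ℂ) b) *
         ((ε : ℂ) * Complex.I * (Real.sqrt (1 - ξ ^ 2) : ℂ)) ≠ 0) :
    ((starRingEnd ℂ) a *
        ((a + b) * (ξ : ℂ) -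
          (a - b) * ((ε : ℂ) * Complex.I * (Real.sqrt (1 - ξ ^ 2) : ℂ))) /
        (((starRingEnd ℂ) a + (starRingEnd ℂ) b) * (ξ : ℂ) +
          ((starRingEnd ℂ) a - (starRingEnd ℂ) b) *
            ((ε : ℂ) * Complex.I * (Real.sqrt (1 - ξ ^ 2) : ℂ)))) *
      ((c : ℂ) / 2 *
        ((1 - (starRingEnd ℂ) b / (starRingEnd ℂ) a) +
          (1 + (starRingEnd ℂ) b / (starRingEnd ℂ) a) * (ξ : ℂ) /
            ((ε : ℂ) * Complex.I * (Real.sqrt (1 - ξ ^ 2) : ℂ)))) +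
      a * (starRingEnd ℂ)
        ((c : ℂ) / 2 *
          ((1 - (starRingEnd ℂ) b / (starRingEnd ℂ) a) +
            (1 + (starRingEnd ℂ) b / (starRingEnd ℂ) a) * (ξ : ℂ) /
              ((ε : ℂ) * Complex.I * (Real.sqrt (1 - ξ ^ 2) : ℂ)))) = 0 := by
  have hε0 : ε ≠ 0 := by rcases hε with rfl | rfl <;> norm_num
  exact equal_strength_of_conj_eq_neg c ha (slit_value_ne_zero hξ hε0) (conj_slit_value ξ ε) hD
end

section
/- Let a, b ∈ ℂ with a ≠ 0 and |b| ≤ |a|, and set m₋ := 1 − conj(b)/conj(a) and m₊ := 1 + conj(b)/conj(a). Then for every ζ ∈ Ω := ℂ ∖ [−1,1], one has m₋·f(ζ) + m₊·ζ ≠ 0. -/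
/-!
Write `γ = conj b / conj a`, so `‖γ‖ ≤ 1`, and `u = (1 - ζ⁻²)^{1/2}`. For `ζ ∉ [-1,1]` the number
`1 - ζ⁻²` avoids `(-∞, 0]`, so its principal square root `u` has positive real part, and
`η(ζ) = ζ((1 - γ)u + (1 + γ))`. A zero would force `u = -(1 + γ)/(1 - γ)`, but the Cayley transform
`(1 + γ)/(1 - γ)` maps the closed unit disc (minus `1`) into the closed right half-plane:
`Re (conj (1 - γ) (1 + γ)) = 1 - |γ|² ≥ 0`.
-/

open Complex ComplexConjugate

lemma re_cpow_half_pos {z : ℂ} (hz : z ∈ slitPlane) : 0 < (z ^ (1 / 2 : ℂ)).re := by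
  rw [cpow_def_of_ne_zero (slitPlane_ne_zero hz), exp_re]
  have him : (log z * (1 / 2)).im = z.arg / 2 := by simp [log_im, div_eq_mul_inv]
  have hlo := neg_pi_lt_arg z
  have hhi := (arg_le_pi z).lt_of_ne (slitPlane_arg_ne_pi hz)
  rw [him]
  exact mul_pos (Real.exp_pos _) (Real.cos_pos_of_mem_Ioo ⟨by linarith, by linarith⟩)

lemma one_sub_inv_sq_mem_slitPlane {ζ : ℂ} (hζ : ζ ∉ slit) : 1 - ζ⁻¹ ^ 2 ∈ slitPlane := by
  contrapose! hζ
  set w := ζ⁻¹ with hw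
  simp only [mem_slitPlane_iff, not_or, not_lt, not_not, sub_re, sub_im, one_re, one_im, sq,
    mul_re, mul_im] at hζ
  obtain ⟨hre, him⟩ := hζ
  have hwim : w.im = 0 := by
    rcases mul_eq_zero.mp (show w.re * w.im = 0 by linarith) with h | h
    · nlinarith [sq_nonneg w.im]
    · exact h
  have hwre : 1 ≤ w.re ^ 2 := by nlinarith
  have hζw : ζ = ((w.re)⁻¹ : ℝ) := by
    rw [← inv_inv ζ, ← hw, ofReal_inv]
    exact congrArg _ (Complex.ext rfl (by simp [hwim]))
  rw [hζw]
  refine ⟨ofReal_im _, abs_le.mp ?_⟩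
  rw [ofReal_re, abs_inv]
  exact inv_le_one_of_one_le₀ (one_le_sq_iff_one_le_abs _ |>.mp hwre)

lemma one_sub_mul_add_one_add_ne_zero {γ u : ℂ} (hγ : ‖γ‖ ≤ 1) (hu : 0 < u.re) :
    (1 - γ) * u + (1 + γ) ≠ 0 := by
  intro h
  rcases eq_or_ne γ 1 with rfl | hγ1
  · norm_num at h
  have key : (conj (1 - γ) * ((1 - γ) * u + (1 + γ))).re =
      normSq (1 - γ) * u.re + (1 - normSq γ) := by
    simp only [mul_re, mul_im, conj_re, conj_im, sub_re, sub_im, add_re, add_im, one_re, one_im,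
      normSq_apply]
    ring
  have hγsq : normSq γ ≤ 1 := by
    rw [normSq_eq_norm_sq]
    exact pow_le_one₀ (norm_nonneg γ) hγ
  have hpos : 0 < normSq (1 - γ) := normSq_pos.mpr (sub_ne_zero.mpr hγ1.symm)
  rw [h, mul_zero, zero_re] at key
  nlinarith [mul_pos hpos hu]

theorem stmt_6_general (a b : ℂ) (hba : ‖b‖ ≤ ‖a‖) :
    ∀ ζ ∈ Omg,
      (1 - (starRingEnd ℂ) b / (starRingEnd ℂ) a) * fbr ζ +
        (1 + (starRingEnd ℂ) b / (starRingEnd ℂ) a) * ζ ≠ 0 := by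
  intro ζ hζ hη
  have hζ0 : ζ ≠ 0 := by
    rintro rfl
    exact hζ ⟨rfl, by norm_num, by norm_num⟩
  have hγ : ‖conj b / conj a‖ ≤ 1 := by
    rw [norm_div, norm_conj, norm_conj]
    exact div_le_one_of_le₀ hba (norm_nonneg a)
  refine one_sub_mul_add_one_add_ne_zero hγ (re_cpow_half_pos (one_sub_inv_sq_mem_slitPlane hζ))
    ((mul_eq_zero.mp ?_).resolve_left hζ0)
  rw [← hη, fbr]
  ring

/-- When `|b| ≤ |a|`, the function `η(ζ) = m₋ f(ζ) + m₊ ζ` has no zeros in the cut plane `Ω`. -/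
theorem stmt_6 (a b : ℂ) (ha : a ≠ 0) (hba : ‖b‖ ≤ ‖a‖) :
    ∀ ζ ∈ Omg,
      (1 - (starRingEnd ℂ) b / (starRingEnd ℂ) a) * fbr ζ +
        (1 + (starRingEnd ℂ) b / (starRingEnd ℂ) a) * ζ ≠ 0 :=
  stmt_6_general a b hba
end

section
/- Let a, b ∈ ℂ with a ≠ 0, and define ψ(ζ) := conj(a)·((a+b)ζ − (a−b)·f(ζ)) / ((conj(a)+conj(b))ζ + (conj(a)−conj(b))·f(ζ)). Then ζ²·(ψ(ζ) − b) tends to (|a|² − |b|²)/(4·conj(a)) as |ζ| → ∞. -/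
open Filter Topology

lemma Complex.cpow_one_div_two_sq (z : ℂ) : (z ^ ((1 : ℂ) / 2)) ^ 2 = z := by
  rw [one_div, Complex.cpow_ofNat_inv_pow]

lemma sq_mul_div_sub_eq_of_sq_eq_one_sub_inv_sq {K : Type*} [Field K] {A B a b ζ s : K}
    (hζ : ζ ≠ 0) (hs : s ^ 2 = 1 - ζ⁻¹ ^ 2) (hs₁ : 1 + s ≠ 0) (hD : (A + B) + (A - B) * s ≠ 0) :
    ζ ^ 2 * (A * ((a + b) * ζ - (a - b) * (ζ * s)) / ((A + B) * ζ + (A - B) * (ζ * s)) - b) =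
      (A * a - B * b) / ((1 + s) * ((A + B) + (A - B) * s)) := by
  have hζs : ζ ^ 2 * (1 - s) * (1 + s) = 1 := by
    rw [show ζ ^ 2 * (1 - s) * (1 + s) = ζ ^ 2 * (1 - s ^ 2) by ring, hs]
    field_simp
    ring
  have hden : (A + B) * ζ + (A - B) * (ζ * s) = ζ * ((A + B) + (A - B) * s) := by ring
  rw [hden, div_sub' (mul_ne_zero hζ hD), mul_div_assoc', div_eq_div_iff
    (mul_ne_zero hζ hD) (mul_ne_zero hs₁ hD)]
  linear_combination (ζ * (A * a - B * b) * ((A + B) + (A - B) * s)) * hζs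

lemma tendsto_one_sub_inv_sq_cpow_one_div_two :
    Tendsto (fun ζ : ℂ => (1 - ζ⁻¹ ^ 2) ^ ((1 : ℂ) / 2)) (cocompact ℂ) (𝓝 1) := by
  have hinv : Tendsto (fun ζ : ℂ => ζ⁻¹) (cocompact ℂ) (𝓝 0) :=
    Metric.cobounded_eq_cocompact (α := ℂ) ▸ tendsto_inv₀_cobounded
  have hbase : Tendsto (fun ζ : ℂ => 1 - ζ⁻¹ ^ 2) (cocompact ℂ) (𝓝 1) := by
    simpa using tendsto_const_nhds.sub (hinv.pow 2)
  simpa [Function.comp_def] using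
    (continuousAt_cpow_const (b := (1 : ℂ) / 2) Complex.one_mem_slitPlane).tendsto.comp hbase

/-- The asymptotics `ψ(ζ) = b + O(ζ⁻²)` of the one-cavity solution:
`ζ²(ψ(ζ) − b) → (|a|² − |b|²)/(4 conj a)` as `|ζ| → ∞`. -/
theorem stmt_10 (a b : ℂ) (ha : a ≠ 0) :
    Filter.Tendsto
      (fun ζ : ℂ => ζ ^ 2 *
        ((starRingEnd ℂ) a * ((a + b) * ζ - (a - b) * fbr ζ) /
          (((starRingEnd ℂ) a + (starRingEnd ℂ) b) * ζ +
            ((starRingEnd ℂ) a - (starRingEnd ℂ) b) * fbr ζ) - b))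
      (Filter.cocompact ℂ)
      (nhds (((‖a‖ ^ 2 - ‖b‖ ^ 2 : ℝ) : ℂ) / (4 * (starRingEnd ℂ) a))) := by
  set A := starRingEnd ℂ a
  set B := starRingEnd ℂ b
  have h2A : 2 * A ≠ 0 := mul_ne_zero two_ne_zero ((map_ne_zero _).2 ha)
  set s := fun ζ : ℂ => (1 - ζ⁻¹ ^ 2) ^ ((1 : ℂ) / 2)
  have hs : Tendsto s (cocompact ℂ) (𝓝 1) := tendsto_one_sub_inv_sq_cpow_one_div_two
  have hs₁ : Tendsto (fun ζ => 1 + s ζ) (cocompact ℂ) (𝓝 2) := by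
    convert tendsto_const_nhds.add hs
    norm_num
  have hD : Tendsto (fun ζ => (A + B) + (A - B) * s ζ) (cocompact ℂ) (𝓝 (2 * A)) := by
    convert tendsto_const_nhds.add (tendsto_const_nhds.mul hs) using 2
    ring
  have hlimit : ((‖a‖ ^ 2 - ‖b‖ ^ 2 : ℝ) : ℂ) / (4 * A) = (A * a - B * b) / (2 * (2 * A)) := by
    rw [Complex.conj_mul', Complex.conj_mul']
    push_cast
    ring
  rw [hlimit]
  refine (tendsto_const_nhds.div (hs₁.mul hD) (mul_ne_zero two_ne_zero h2A)).congr' ?_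
  have hζ : ∀ᶠ ζ : ℂ in cocompact ℂ, ζ ≠ 0 := Metric.cobounded_eq_cocompact (α := ℂ) ▸
    Bornology.eventually_ne_cobounded 0
  filter_upwards [hζ, hs₁.eventually_ne two_ne_zero, hD.eventually_ne h2A] with ζ hζ hs₁ζ hDζ
  exact (sq_mul_div_sub_eq_of_sq_eq_one_sub_inv_sq hζ (Complex.cpow_one_div_two_sq _)
    hs₁ζ hDζ).symm
end

section
/- Let ζ∞, I₀, I₁, I₂, λ₁, d be real numbers with λ₀ := ζ∞²·I₀ − 2ζ∞·I₁ + I₂ ≠ 0. Then the linear system A₁ + ζ∞·A₂ + ζ∞²·A₃ = d, A₂ + 2ζ∞·A₃ = d·λ₁, I₀·A₁ + I₁·A₂ + I₂·A₃ = 0 in the unknowns (A₁, A₂, A₃) has the unique solution A₁ = (d/λ₀)·(ζ∞(λ₁ζ∞ − 2)·I₁ + (1 − λ₁ζ∞)·I₂), A₂ = (d/λ₀)·(ζ∞(2 − λ₁ζ∞)·I₀ + λ₁·I₂), A₃ = −(d/λ₀)·((1 − λ₁ζ∞)·I₀ + λ₁·I₁). -/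
/-- The linear system (2.23.2)/(2.26) for the coefficients of the two-cavity conformal map
has the unique solution (2.28), provided `lam₀ = ζi²I₀ − 2ζiI₁ + I₂ ≠ 0`. -/
theorem stmt_15 (ζi I₀ I₁ I₂ lam₁ d : ℝ)
    (hlam₀ : ζi ^ 2 * I₀ - 2 * ζi * I₁ + I₂ ≠ 0) :
    ∀ A₁ A₂ A₃ : ℝ,
      (A₁ + ζi * A₂ + ζi ^ 2 * A₃ = d ∧
       A₂ + 2 * ζi * A₃ = d * lam₁ ∧
       I₀ * A₁ + I₁ * A₂ + I₂ * A₃ = 0) ↔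
      (A₁ = d / (ζi ^ 2 * I₀ - 2 * ζi * I₁ + I₂) *
          (ζi * (lam₁ * ζi - 2) * I₁ + (1 - lam₁ * ζi) * I₂) ∧
       A₂ = d / (ζi ^ 2 * I₀ - 2 * ζi * I₁ + I₂) *
          (ζi * (2 - lam₁ * ζi) * I₀ + lam₁ * I₂) ∧
       A₃ = -(d / (ζi ^ 2 * I₀ - 2 * ζi * I₁ + I₂)) *
          ((1 - lam₁ * ζi) * I₀ + lam₁ * I₁)) := by
  intro A₁ A₂ A₃
  set L := ζi ^ 2 * I₀ - 2 * ζi * I₁ + I₂ with hL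
  constructor
  · rintro ⟨h1, h2, h3⟩
    have hA₃ : L * A₃ = -(d * ((1 - lam₁ * ζi) * I₀ + lam₁ * I₁)) := by
      linear_combination h3 - I₀ * h1 - (I₁ - ζi * I₀) * h2
    have hA₂ : L * A₂ = d * (ζi * (2 - lam₁ * ζi) * I₀ + lam₁ * I₂) := by
      linear_combination L * h2 - 2 * ζi * hA₃
    have hA₁ : L * A₁ = d * (ζi * (lam₁ * ζi - 2) * I₁ + (1 - lam₁ * ζi) * I₂) := by
      linear_combination L * h1 - ζi * hA₂ - ζi ^ 2 * hA₃
    refine ⟨?_, ?_, ?_⟩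
    · field_simp; linarith [hA₁]
    · field_simp; linarith [hA₂]
    · field_simp; linarith [hA₃]
  · rintro ⟨h1, h2, h3⟩
    subst h1 h2 h3
    refine ⟨?_, ?_, ?_⟩ <;> field_simp <;> ring
end

section
/- Let K ⊆ ℂ be a compact set such that U := ℂ ∖ K is nonempty and connected, let c be a real number and L a complex number with Re L = c. Suppose f : ℂ → ℂ is complex differentiable on U, continuous on the closure of U, satisfies Re f(z) = c for every z in the frontier of U, and f(z) tends to L along the cocompact filter (i.e. as |z| → ∞). Then f(z) = L for every z ∈ U. -/
/-!
On the bounded pieces `Kᶜ ∩ ball 0 R` the maximum modulus principle applied to `exp (± f)`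
bounds `Re f` by its values on `frontier Kᶜ` and on a large circle, where it is close to
`Re L = c`. Hence `Re f = c` on `Kᶜ`. By the open mapping theorem a holomorphic function whose
image lies in the line `Re w = c` is constant on the connected set `Kᶜ`, and the constant is
its limit `L` at infinity.
-/

open Filter Metric Set Topology

namespace Complex

theorem norm_le_of_forall_mem_frontier_norm_le_of_eventually_cocompact {U : Set ℂ}
    {g : ℂ → ℂ} {C : ℝ} (hg : DiffContOnCl ℂ g U) (hfr : ∀ z ∈ frontier U, ‖g z‖ ≤ C)
    (hinf : ∀ᶠ z in cocompact ℂ, ‖g z‖ ≤ C) {z : ℂ} (hz : z ∈ closure U) : ‖g z‖ ≤ C := by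
  obtain ⟨t, ht, hgt⟩ := mem_cocompact.mp hinf
  obtain ⟨R, hR⟩ := ht.isBounded.subset_closedBall 0
  set R' := max R ‖z‖ + 1
  have hRR' : R < R' := by linarith [le_max_left R ‖z‖]
  have hzR' : z ∈ ball (0 : ℂ) R' := by
    rw [mem_ball_zero_iff]; linarith [le_max_right R ‖z‖]
  refine norm_le_of_forall_mem_frontier_norm_le (isBounded_ball.subset inter_subset_left)
    (hg.mono inter_subset_right) (fun w hw => ?_) (isOpen_ball.inter_closure ⟨hzR', hz⟩)
  rcases frontier_inter_subset _ U hw with ⟨hwR, -⟩ | ⟨-, hwU⟩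
  · refine hgt fun hwt => ?_
    have hw_norm : ‖w‖ = R' := by
      simpa using frontier_ball_subset_sphere hwR
    have := mem_closedBall_zero_iff.mp (hR hwt)
    linarith
  · exact hfr w hwU

theorem re_le_of_forall_mem_frontier_re_le {U : Set ℂ} {f : ℂ → ℂ} {c : ℝ}
    (hf : DiffContOnCl ℂ f U) (hfr : ∀ z ∈ frontier U, (f z).re ≤ c)
    (hinf : ∀ c' > c, ∀ᶠ z in cocompact ℂ, (f z).re ≤ c') {z : ℂ} (hz : z ∈ closure U) :
    (f z).re ≤ c := by
  refine le_of_forall_gt_imp_ge_of_dense fun c' hc' => ?_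
  have hexp : DiffContOnCl ℂ (fun w => exp (f w)) U :=
    ⟨hf.differentiableOn.cexp, continuous_exp.comp_continuousOn hf.continuousOn⟩
  have := norm_le_of_forall_mem_frontier_norm_le_of_eventually_cocompact hexp (C := Real.exp c')
    (fun w hw => by simpa [norm_exp] using (hfr w hw).trans hc'.le)
    ((hinf c' hc').mono fun w hw => by simpa [norm_exp] using hw) hz
  simpa [norm_exp] using this

theorem le_re_of_forall_mem_frontier_le_re {U : Set ℂ} {f : ℂ → ℂ} {c : ℝ}
    (hf : DiffContOnCl ℂ f U) (hfr : ∀ z ∈ frontier U, c ≤ (f z).re)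
    (hinf : ∀ c' < c, ∀ᶠ z in cocompact ℂ, c' ≤ (f z).re) {z : ℂ} (hz : z ∈ closure U) :
    c ≤ (f z).re := by
  have := re_le_of_forall_mem_frontier_re_le (f := fun w => -f w) (c := -c) hf.neg
    (fun w hw => by simpa using hfr w hw)
    (fun c' hc' => (hinf (-c') (by linarith)).mono fun w hw => by rw [neg_re]; linarith) hz
  simp only [neg_re] at this
  linarith

theorem _root_.AnalyticOnNhd.exists_eqOn_const_of_re_eq {U : Set ℂ} {f : ℂ → ℂ} {c : ℝ}
    (hf : AnalyticOnNhd ℂ f U) (hU : IsPreconnected U) (hUo : IsOpen U)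
    (hre : ∀ z ∈ U, (f z).re = c) : ∃ w, ∀ z ∈ U, f z = w := by
  rcases U.eq_empty_or_nonempty with rfl | ⟨z₀, hz₀⟩
  · exact ⟨0, by simp⟩
  refine (hf.is_constant_or_isOpen hU).resolve_right fun hopen => ?_
  have himage : f '' U ⊆ interior (re ⁻¹' {c}) :=
    (hopen U subset_rfl hUo).subset_interior_iff.mpr <| image_subset_iff.mpr hre
  simpa [interior_preimage_re] using himage ⟨z₀, hz₀, rfl⟩

end Complex

theorem stmt_16_general (K : Set ℂ) (hK : IsCompact K)
    (hconn : IsConnected (Kᶜ : Set ℂ))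
    (c : ℝ) (L : ℂ) (hL : L.re = c) (f : ℂ → ℂ)
    (hf : DifferentiableOn ℂ f Kᶜ)
    (hcont : ContinuousOn f (closure (Kᶜ : Set ℂ)))
    (hbd : ∀ z ∈ frontier (Kᶜ : Set ℂ), (f z).re = c)
    (hlim : Filter.Tendsto f (Filter.cocompact ℂ) (nhds L)) :
    ∀ z ∈ (Kᶜ : Set ℂ), f z = L := by
  have hdc : DiffContOnCl ℂ f Kᶜ := ⟨hf, hcont⟩
  have hlim_re : Tendsto (fun z => (f z).re) (cocompact ℂ) (𝓝 c) :=
    hL ▸ (Complex.continuous_re.tendsto L).comp hlim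
  have hre : ∀ z ∈ Kᶜ, (f z).re = c := fun z hz => le_antisymm
    (Complex.re_le_of_forall_mem_frontier_re_le hdc (fun w hw => (hbd w hw).le)
      (fun _ hc' => (hlim_re.eventually_lt_const hc').mono fun _ => le_of_lt) (subset_closure hz))
    (Complex.le_re_of_forall_mem_frontier_le_re hdc (fun w hw => (hbd w hw).ge)
      (fun _ hc' => (hlim_re.eventually_const_lt hc').mono fun _ => le_of_lt) (subset_closure hz))
  have hUo : IsOpen Kᶜ := hK.isClosed.isOpen_compl
  obtain ⟨w, hw⟩ :=
    (hf.analyticOnNhd hUo).exists_eqOn_const_of_re_eq hconn.isPreconnected hUo hre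
  have hwL : w = L := tendsto_nhds_unique (tendsto_const_nhds.congr'
    (eventually_of_mem hK.compl_mem_cocompact fun z hz => (hw z hz).symm)) hlim
  exact hwL ▸ hw

/-- Maximum-principle argument of Section 2: a function holomorphic on the exterior `U = Kᶜ`
of a compact set, continuous up to the boundary, with `Re f = c` on the frontier of `U` and
`f → L` (with `Re L = c`) at infinity, is identically equal to `L` on `U`. -/
theorem stmt_16 (K : Set ℂ) (hK : IsCompact K)
    (hne : (Kᶜ : Set ℂ).Nonempty) (hconn : IsConnected (Kᶜ : Set ℂ))
    (c : ℝ) (L : ℂ) (hL : L.re = c) (f : ℂ → ℂ)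
    (hf : DifferentiableOn ℂ f Kᶜ)
    (hcont : ContinuousOn f (closure (Kᶜ : Set ℂ)))
    (hbd : ∀ z ∈ frontier (Kᶜ : Set ℂ), (f z).re = c)
    (hlim : Filter.Tendsto f (Filter.cocompact ℂ) (nhds L)) :
    ∀ z ∈ (Kᶜ : Set ℂ), f z = L :=
  stmt_16_general K hK hconn c L hL f hf hcont hbd hlim
end
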